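/- arXiv:2511.12672 — 5 statements merged into one kernel-verified Lean document; each statement's English description precedes it below -/
import Mathlib

section
/- Let X and Y be real Banach spaces. Assume: (i) there is a continuous linear map P : X → X with P∘P = P and ‖P‖ ≤ 1 and a surjective linear isometry from Y onto the range of P, and there is a continuous linear map R : Y → Y with R∘R = R and ‖R‖ ≤ 1 and a surjective linear isometry from X onto the range of R; (ii) there is a surjective linear isometry from X onto X × X and a surjective linear isometry from Y onto Y × Y, where products carry the max norm. Then there exists a continuous linear equivalence T : X ≃ Y with ‖T‖·‖T⁻¹‖ ≤ (3 + √2)². -/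
/-!
Pełczyński's decomposition method, keeping track of norms. Splitting `X = ran P ⊕ ker P` and using
`ran P ≅ Y ≅ Y × Y ≅ Y × ran P` gives `X ≅ Y × (ran P ⊕ ker P) = Y × X`; symmetrically
`Y ≅ X × Y`, and `X ≅ Y × X ≅ X × Y ≅ Y`. Scaling the `Y`-factor by `a` and the `ker P`-factor
by `b` makes this isomorphism and its inverse both of norm at most `max ((1 + 2b)/a, a) + 2a/b`.
-/

namespace LinearIsometryEquiv

variable {R E E₂ F F₂ : Type*} [Semiring R]
  [SeminormedAddCommGroup E] [SeminormedAddCommGroup E₂] [SeminormedAddCommGroup F]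
  [SeminormedAddCommGroup F₂] [Module R E] [Module R E₂] [Module R F] [Module R F₂]

def prodCongr (f : E ≃ₗᵢ[R] E₂) (g : F ≃ₗᵢ[R] F₂) : E × F ≃ₗᵢ[R] E₂ × F₂ :=
  ⟨f.toLinearEquiv.prodCongr g.toLinearEquiv, fun x => by simp [Prod.norm_def]⟩

end LinearIsometryEquiv

open ContinuousLinearEquiv

section

variable {U V : Type*} [NormedAddCommGroup U] [NormedSpace ℝ U]
  [NormedAddCommGroup V] [NormedSpace ℝ V]

theorem exists_equiv_range_prod_ker (P : U →L[ℝ] U) (hPidem : ∀ x, P (P x) = P x)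
    (hPnorm : ‖P‖ ≤ 1) :
    ∃ D : U ≃L[ℝ] LinearMap.range (P : U →ₗ[ℝ] U) × LinearMap.ker (P : U →ₗ[ℝ] U),
      (∀ x, ‖(D x).1‖ ≤ ‖x‖) ∧ (∀ x, ‖(D x).2‖ ≤ 2 * ‖x‖) ∧
        ∀ s k, ‖D.symm (s, k)‖ ≤ ‖s‖ + ‖k‖ := by
  have hP : IsIdempotentElem P := ContinuousLinearMap.ext hPidem
  let D :=
    (Submodule.prodEquivOfIsTopCompl _ _ (ContinuousLinearMap.IsIdempotentElem.isTopCompl hP)).symm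
  have hPx : ∀ x, ‖P x‖ ≤ ‖x‖ := fun x => (P.le_of_opNorm_le hPnorm x).trans_eq (one_mul _)
  have hsum : ∀ x, ((D x).1 : U) + (D x).2 = x := D.symm_apply_apply
  have hfst : ∀ x, ((D x).1 : U) = P x := by
    intro x
    conv_rhs => rw [← hsum x]
    obtain ⟨⟨_, y, rfl⟩, ⟨k, hk⟩⟩ := D x
    simpa [hPidem] using hk
  refine ⟨D, fun x => ?_, fun x => ?_, fun s k => norm_add_le (s : U) k⟩
  · calc ‖(D x).1‖ = ‖P x‖ := by rw [← hfst x, Submodule.coe_norm]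
      _ ≤ ‖x‖ := hPx x
  · have hsnd : ((D x).2 : U) = x - P x := hfst x ▸ eq_sub_of_add_eq' (hsum x)
    calc ‖(D x).2‖ = ‖x - P x‖ := by rw [← hsnd, Submodule.coe_norm]
      _ ≤ ‖x‖ + ‖P x‖ := norm_sub_le _ _
      _ ≤ 2 * ‖x‖ := by linarith [hPx x]

variable {S K : Type*} [NormedAddCommGroup S] [NormedSpace ℝ S]
  [NormedAddCommGroup K] [NormedSpace ℝ K]

theorem exists_equiv_prod_of_decomposition (D : U ≃L[ℝ] S × K)
    (hD₁ : ∀ x, ‖(D x).1‖ ≤ ‖x‖) (hD₂ : ∀ x, ‖(D x).2‖ ≤ 2 * ‖x‖)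
    (hDsymm : ∀ s k, ‖D.symm (s, k)‖ ≤ ‖s‖ + ‖k‖) (σ : S ≃ₗᵢ[ℝ] V × S)
    {a b : ℝ} (ha : 0 < a) (hb : 0 < b) :
    ∃ Ψ : U ≃L[ℝ] V × U, (∀ x, ‖(Ψ x).1‖ ≤ a * ‖x‖) ∧ (∀ x, ‖(Ψ x).2‖ ≤ (1 + 2 * b) * ‖x‖) ∧
      ∀ v u, ‖Ψ.symm (v, u)‖ ≤ max (‖v‖ / a) ‖u‖ + 2 / b * ‖u‖ := by
  let A : V ≃L[ℝ] V := smulLeft (Units.mk0 a ha.ne')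
  let B : K ≃L[ℝ] K := smulLeft (Units.mk0 b hb.ne')
  have hσ₁ : ∀ s, ‖(σ s).1‖ ≤ ‖s‖ := fun s => (norm_fst_le _).trans_eq (σ.norm_map s)
  have hσ₂ : ∀ s, ‖(σ s).2‖ ≤ ‖s‖ := fun s => (norm_snd_le _).trans_eq (σ.norm_map s)
  refine ⟨D.trans (((σ : S ≃L[ℝ] V × S).prodCongr B).trans
    ((prodAssoc ℝ V S K).trans (A.prodCongr D.symm))), fun x => ?_, fun x => ?_, fun v u => ?_⟩
  · change ‖a • (σ (D x).1).1‖ ≤ _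
    rw [norm_smul, Real.norm_of_nonneg ha.le]
    gcongr
    exact (hσ₁ _).trans (hD₁ x)
  · change ‖D.symm ((σ (D x).1).2, b • (D x).2)‖ ≤ _
    calc _ ≤ ‖(σ (D x).1).2‖ + ‖b • (D x).2‖ := hDsymm _ _
      _ ≤ ‖x‖ + b * (2 * ‖x‖) := by
        rw [norm_smul, Real.norm_of_nonneg hb.le]
        gcongr; exacts [(hσ₂ _).trans (hD₁ x), hD₂ x]
      _ = _ := by ring
  · change ‖D.symm (σ.symm (a⁻¹ • v, (D u).1), b⁻¹ • (D u).2)‖ ≤ _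
    calc _ ≤ ‖σ.symm (a⁻¹ • v, (D u).1)‖ + ‖b⁻¹ • (D u).2‖ := hDsymm _ _
      _ = max (‖v‖ / a) ‖(D u).1‖ + ‖(D u).2‖ / b := by
        rw [σ.symm.norm_map, Prod.norm_def, norm_smul, norm_smul,
          Real.norm_of_nonneg (inv_nonneg.2 ha.le), Real.norm_of_nonneg (inv_nonneg.2 hb.le)]
        simp only [div_eq_inv_mul]
      _ ≤ max (‖v‖ / a) ‖u‖ + 2 * ‖u‖ / b := by gcongr; exacts [hD₁ u, hD₂ u]
      _ = _ := by ring

theorem opNorm_trans_prodComm_trans_symm_le (Ψ : U ≃L[ℝ] V × U) (Φ : V ≃L[ℝ] U × V)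
    {a b : ℝ} (ha : 0 < a) (hb : 0 < b)
    (hΨ₁ : ∀ x, ‖(Ψ x).1‖ ≤ a * ‖x‖) (hΨ₂ : ∀ x, ‖(Ψ x).2‖ ≤ (1 + 2 * b) * ‖x‖)
    (hΦ : ∀ u v, ‖Φ.symm (u, v)‖ ≤ max (‖u‖ / a) ‖v‖ + 2 / b * ‖v‖) :
    ‖(Ψ.trans ((prodComm ℝ V U).trans Φ.symm) : U →L[ℝ] V)‖ ≤
      max ((1 + 2 * b) / a) a + 2 * a / b := by
  refine ContinuousLinearMap.opNorm_le_bound _ (by positivity) fun x => ?_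
  change ‖Φ.symm ((Ψ x).2, (Ψ x).1)‖ ≤ _
  calc _ ≤ max (‖(Ψ x).2‖ / a) ‖(Ψ x).1‖ + 2 / b * ‖(Ψ x).1‖ := hΦ _ _
    _ ≤ max ((1 + 2 * b) * ‖x‖ / a) (a * ‖x‖) + 2 / b * (a * ‖x‖) := by
        gcongr; exacts [hΨ₂ x, hΨ₁ x, hΨ₁ x]
    _ = _ := by rw [mul_div_right_comm, ← max_mul_of_nonneg _ _ (norm_nonneg x)]; ring

theorem exists_equiv_prod_of_complemented_isometric_copy (P : U →L[ℝ] U)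
    (hPidem : ∀ x, P (P x) = P x) (hPnorm : ‖P‖ ≤ 1)
    (e : V ≃ₗᵢ[ℝ] LinearMap.range (P : U →ₗ[ℝ] U)) (sq : V ≃ₗᵢ[ℝ] V × V)
    {a b : ℝ} (ha : 0 < a) (hb : 0 < b) :
    ∃ Ψ : U ≃L[ℝ] V × U, (∀ x, ‖(Ψ x).1‖ ≤ a * ‖x‖) ∧ (∀ x, ‖(Ψ x).2‖ ≤ (1 + 2 * b) * ‖x‖) ∧
      ∀ v u, ‖Ψ.symm (v, u)‖ ≤ max (‖v‖ / a) ‖u‖ + 2 / b * ‖u‖ := by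
  obtain ⟨D, hD₁, hD₂, hDsymm⟩ := exists_equiv_range_prod_ker P hPidem hPnorm
  exact exists_equiv_prod_of_decomposition D hD₁ hD₂ hDsymm
    (e.symm.trans (sq.trans ((LinearIsometryEquiv.refl ℝ V).prodCongr e))) ha hb

end

theorem banachMazur_upper_bound_of_decomposition_general
    {X Y : Type*} [NormedAddCommGroup X] [NormedSpace ℝ X]
    [NormedAddCommGroup Y] [NormedSpace ℝ Y]
    (P : X →L[ℝ] X) (hPidem : ∀ x, P (P x) = P x) (hPnorm : ‖P‖ ≤ 1)
    (R : Y →L[ℝ] Y) (hRidem : ∀ y, R (R y) = R y) (hRnorm : ‖R‖ ≤ 1)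
    (e₁ : Y ≃ₗᵢ[ℝ] LinearMap.range (P : X →ₗ[ℝ] X))
    (e₂ : X ≃ₗᵢ[ℝ] LinearMap.range (R : Y →ₗ[ℝ] Y))
    (e₃ : X ≃ₗᵢ[ℝ] X × X)
    (e₄ : Y ≃ₗᵢ[ℝ] Y × Y) :
    ∃ T : X ≃L[ℝ] Y,
      ‖(T : X →L[ℝ] Y)‖ * ‖(T.symm : Y →L[ℝ] X)‖ ≤ (3 + Real.sqrt 2) ^ 2 := by
  have ha : (0 : ℝ) < 5 / 2 := by norm_num
  have hb : (0 : ℝ) < 21 / 8 := by norm_num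
  obtain ⟨Ψ, hΨ₁, hΨ₂, hΨ₃⟩ :=
    exists_equiv_prod_of_complemented_isometric_copy P hPidem hPnorm e₁ e₄ ha hb
  obtain ⟨Φ, hΦ₁, hΦ₂, hΦ₃⟩ :=
    exists_equiv_prod_of_complemented_isometric_copy R hRidem hRnorm e₂ e₃ ha hb
  -- `a = 5/2`, `b = 21/8` satisfy `a² = 1 + 2b`, so the two terms of the `max` agree; the bound
  -- `a + 2a/b` then equals `185/42`, just below `3 + √2 ≈ 4.4142`.
  have hC :
      max ((1 + 2 * (21 / 8)) / (5 / 2)) (5 / 2) + 2 * (5 / 2) / (21 / 8) = (185 / 42 : ℝ) := by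
    norm_num
  have hT := opNorm_trans_prodComm_trans_symm_le Ψ Φ ha hb hΨ₁ hΨ₂ hΦ₃
  have hTsymm := opNorm_trans_prodComm_trans_symm_le Φ Ψ ha hb hΦ₁ hΦ₂ hΨ₃
  rw [hC] at hT hTsymm
  have h185 : (185 / 42 : ℝ) ≤ 3 + Real.sqrt 2 := by
    have h59 : (59 / 42 : ℝ) ≤ Real.sqrt 2 :=
      (Real.le_sqrt (by norm_num) (by norm_num)).2 (by norm_num)
    linarith
  refine ⟨Ψ.trans ((prodComm ℝ Y X).trans Φ.symm), ?_⟩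
  calc _ ≤ (185 / 42 : ℝ) ^ 2 := by
        rw [sq]; exact mul_le_mul hT hTsymm (norm_nonneg _) (by norm_num)
    _ ≤ (3 + Real.sqrt 2) ^ 2 := by gcongr

/-- Pełczyński-type decomposition with explicit constants: if `X` contains a
1-complemented isometric copy of `Y`, `Y` contains a 1-complemented isometric copy of `X`,
and both `X` and `Y` are isometric to their squares (with max norms), then
`d_BM(X, Y) ≤ (3 + √2)²`. -/
theorem banachMazur_upper_bound_of_decomposition
    {X Y : Type*} [NormedAddCommGroup X] [NormedSpace ℝ X] [CompleteSpace X]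
    [NormedAddCommGroup Y] [NormedSpace ℝ Y] [CompleteSpace Y]
    (P : X →L[ℝ] X) (hPidem : ∀ x, P (P x) = P x) (hPnorm : ‖P‖ ≤ 1)
    (R : Y →L[ℝ] Y) (hRidem : ∀ y, R (R y) = R y) (hRnorm : ‖R‖ ≤ 1)
    (e₁ : Y ≃ₗᵢ[ℝ] LinearMap.range (P : X →ₗ[ℝ] X))
    (e₂ : X ≃ₗᵢ[ℝ] LinearMap.range (R : Y →ₗ[ℝ] Y))
    (e₃ : X ≃ₗᵢ[ℝ] X × X)
    (e₄ : Y ≃ₗᵢ[ℝ] Y × Y) :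
    ∃ T : X ≃L[ℝ] Y,
      ‖(T : X →L[ℝ] Y)‖ * ‖(T.symm : Y →L[ℝ] X)‖ ≤ (3 + Real.sqrt 2) ^ 2 :=
  banachMazur_upper_bound_of_decomposition_general P hPidem hPnorm R hRidem hRnorm e₁ e₂ e₃ e₄
end

section
/- Let (K, Σ) be a measurable space, ν a (finite) signed measure on K, A ∈ Σ, and φ, ψ, g bounded measurable real-valued functions on K. Let r, t, ε > 0 be constants such that: (i) the total variation |ν|(K) ≤ t; (ii) φ(x) ≥ r − ε for every x ∈ A; (iii) ∫ φ dν = 0 and ∫ ψ dν = 1; (iv) |σ₁·φ(x) + σ₂·ψ(x) + σ₃·g(x)| ≤ r for every x ∈ K and all σ₁, σ₂, σ₃ ∈ {−1,0,1}. Then |ν|(K) ≥ 2|ν(A)| + 1/r + (1/r)·|∫ g dν| − (3t/r)·ε. -/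
/-!
Test `ν` against `u = -sign (ν A) • φ + ψ + sign (∫ g dν) • g`. By (iv), `|u| ≤ r`, and by (iii),
`∫ u dν = 1 + |∫ g dν|`. On `A`, hypothesis (ii) together with (iv) for `σ₁ = ±1` forces
`|φ - r| ≤ ε` and `|ψ + sign (∫ g dν) • g| ≤ ε`, so `u` is within `2ε` of `-sign (ν A) • r` there.
Splitting the integral over `A` and `Aᶜ` gives
`1 + |∫ g dν| ≤ -r |ν A| + 2ε |ν|(A) + r |ν|(Aᶜ)`, and `|ν A| ≤ |ν|(A) ≤ t` finishes.
-/

open MeasureTheory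

/-- The integral of a function against a signed measure, defined via the Jordan
decomposition: `∫ f dν = ∫ f dν⁺ − ∫ f dν⁻`. -/
noncomputable def signedIntegral {K : Type*} [MeasurableSpace K]
    (ν : SignedMeasure K) (f : K → ℝ) : ℝ :=
  (∫ x, f x ∂ν.toJordanDecomposition.posPart) -
    ∫ x, f x ∂ν.toJordanDecomposition.negPart

lemma SignType.coe_mem_neg_one_zero_one (s : SignType) : (s : ℝ) ∈ ({-1, 0, 1} : Set ℝ) := by
  cases s <;> simp

lemma SignType.abs_coe_le_one (s : SignType) : |(s : ℝ)| ≤ 1 := by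
  cases s <;> simp

lemma sign_neg_mul_self {α : Type*} [CommRing α] [LinearOrder α] [IsStrictOrderedRing α] (x : α) :
    (SignType.sign (-x) : α) * x = -|x| := by
  rw [← abs_neg, ← self_mul_sign (-x)]
  ring

lemma abs_mul_add_sub_mul_le {σ a b r ε : ℝ} (hσ : |σ| ≤ 1) (hε : r - ε ≤ a)
    (hplus : |a + b| ≤ r) (hminus : |-a + b| ≤ r) : |σ * a + b - σ * r| ≤ 2 * ε := by
  obtain ⟨hplus₁, hplus₂⟩ := abs_le.1 hplus
  obtain ⟨hminus₁, hminus₂⟩ := abs_le.1 hminus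
  have ha : |a - r| ≤ ε := abs_le.2 ⟨by linarith, by linarith⟩
  have hb : |b| ≤ ε := abs_le.2 ⟨by linarith, by linarith⟩
  calc |σ * a + b - σ * r| = |σ * (a - r) + b| := by ring_nf
    _ ≤ |σ| * |a - r| + |b| := by rw [← abs_mul]; exact abs_add_le _ _
    _ ≤ 1 * ε + ε := by gcongr
    _ = 2 * ε := by ring

section SignedIntegral

variable {K : Type*} [MeasurableSpace K] {ν : SignedMeasure K} {f g : K → ℝ} {A : Set K}

lemma integrable_totalVariation_iff :
    Integrable f ν.totalVariation ↔
      Integrable f ν.toJordanDecomposition.posPart ∧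
        Integrable f ν.toJordanDecomposition.negPart :=
  integrable_add_measure

lemma signedIntegral_add (hf : Integrable f ν.totalVariation)
    (hg : Integrable g ν.totalVariation) :
    signedIntegral ν (f + g) = signedIntegral ν f + signedIntegral ν g := by
  obtain ⟨hfP, hfN⟩ := integrable_totalVariation_iff.1 hf
  obtain ⟨hgP, hgN⟩ := integrable_totalVariation_iff.1 hg
  simp only [signedIntegral, Pi.add_apply, integral_add hfP hgP, integral_add hfN hgN]
  ring

lemma signedIntegral_smul (c : ℝ) (f : K → ℝ) :
    signedIntegral ν (c • f) = c * signedIntegral ν f := by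
  simp only [signedIntegral, Pi.smul_apply, smul_eq_mul, integral_const_mul]
  ring

lemma signedIntegral_indicator_const (hA : MeasurableSet A) (c : ℝ) :
    signedIntegral ν (A.indicator fun _ ↦ c) = c * ν A := by
  rw [signedIntegral, integral_indicator_const _ hA, integral_indicator_const _ hA,
    ν.apply_eq_posPart_real_sub_negPart_real hA, smul_eq_mul, smul_eq_mul]
  ring

lemma abs_signedIntegral_indicator_le (hA : MeasurableSet A) {C : ℝ}
    (hC : ∀ x ∈ A, |f x| ≤ C) :
    |signedIntegral ν (A.indicator f)| ≤ C * ν.totalVariation.real A := by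
  have hP := norm_setIntegral_le_of_norm_le_const (f := f)
    (measure_lt_top ν.toJordanDecomposition.posPart A) hC
  have hN := norm_setIntegral_le_of_norm_le_const (f := f)
    (measure_lt_top ν.toJordanDecomposition.negPart A) hC
  rw [signedIntegral, integral_indicator hA, integral_indicator hA,
    SignedMeasure.totalVariation, measureReal_add_apply, mul_add]
  exact (abs_sub _ _).trans (add_le_add hP hN)

lemma signedIntegral_le_of_abs_sub_le_on (hA : MeasurableSet A)
    (hf : Integrable f ν.totalVariation) {C c δ : ℝ} (hC : ∀ x, |f x| ≤ C)
    (hδ : ∀ x ∈ A, |f x - c| ≤ δ) :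
    signedIntegral ν f ≤
      c * ν A + δ * ν.totalVariation.real A + C * ν.totalVariation.real Aᶜ := by
  have hsplit : f = A.indicator (fun _ ↦ c) + (A.indicator (f - fun _ ↦ c) + Aᶜ.indicator f) := by
    ext x
    by_cases hx : x ∈ A <;> simp [hx]
  have hnear := abs_signedIntegral_indicator_le (ν := ν) (f := f - fun _ ↦ c) hA hδ
  have hfar := abs_signedIntegral_indicator_le (ν := ν) hA.compl fun x _ ↦ hC x
  rw [hsplit, signedIntegral_add ((integrable_const c).indicator hA)
      (((hf.sub (integrable_const c)).indicator hA).add (hf.indicator hA.compl)),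
    signedIntegral_add ((hf.sub (integrable_const c)).indicator hA) (hf.indicator hA.compl),
    signedIntegral_indicator_const hA]
  linarith [(abs_le.1 hnear).2, (abs_le.1 hfar).2]

lemma totalVariation_ge_of_abs_sub_le_on (hA : MeasurableSet A)
    (hf : Integrable f ν.totalVariation) {σ r δ : ℝ} (hr : 0 < r) (hσ : σ * ν A = -|ν A|)
    (hfr : ∀ x, |f x| ≤ r) (hδ : ∀ x ∈ A, |f x - σ * r| ≤ δ) :
    2 * |ν A| + signedIntegral ν f / r - δ / r * ν.totalVariation.real A ≤
      ν.totalVariation.real Set.univ := by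
  have hest := signedIntegral_le_of_abs_sub_le_on hA hf hfr hδ
  have hνA : r * |ν A| ≤ r * ν.totalVariation.real A :=
    mul_le_mul_of_nonneg_left (ν.norm_le_totalVariation A) hr.le
  rw [← measureReal_add_measureReal_compl hA]
  calc 2 * |ν A| + signedIntegral ν f / r - δ / r * ν.totalVariation.real A
      = (2 * r * |ν A| + signedIntegral ν f - δ * ν.totalVariation.real A) / r := by
        field_simp
    _ ≤ ν.totalVariation.real A + ν.totalVariation.real Aᶜ := by
        rw [div_le_iff₀ hr]
        linear_combination hest + hνA + r * hσ

end SignedIntegral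

theorem variation_lower_bound_general
    {K : Type*} [MeasurableSpace K] (ν : SignedMeasure K)
    (A : Set K) (hA : MeasurableSet A)
    (φ ψ g : K → ℝ)
    (hφm : Measurable φ) (hψm : Measurable ψ) (hgm : Measurable g)
    (r t ε : ℝ) (hr : 0 < r) (hε : 0 < ε)
    (h1 : (ν.totalVariation Set.univ).toReal ≤ t)
    (h2 : ∀ x ∈ A, r - ε ≤ φ x)
    (h3φ : signedIntegral ν φ = 0)
    (h3ψ : signedIntegral ν ψ = 1)
    (h4 : ∀ σ₁ ∈ ({-1, 0, 1} : Set ℝ), ∀ σ₂ ∈ ({-1, 0, 1} : Set ℝ),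
      ∀ σ₃ ∈ ({-1, 0, 1} : Set ℝ), ∀ x : K,
        |σ₁ * φ x + σ₂ * ψ x + σ₃ * g x| ≤ r) :
    2 * |ν A| + 1 / r + (1 / r) * |signedIntegral ν g| - (3 * t / r) * ε ≤
      (ν.totalVariation Set.univ).toReal := by
  have hbound (σ₁ σ₂ σ₃ : SignType) (x : K) : |σ₁ * φ x + σ₂ * ψ x + σ₃ * g x| ≤ r :=
    h4 _ σ₁.coe_mem_neg_one_zero_one _ σ₂.coe_mem_neg_one_zero_one _
      σ₃.coe_mem_neg_one_zero_one x
  have integrable_of_bound {u : K → ℝ} (hu : Measurable u) (hur : ∀ x, |u x| ≤ r) :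
      Integrable u ν.totalVariation :=
    .of_bound hu.aestronglyMeasurable r (ae_of_all _ hur)
  have hφ := integrable_of_bound hφm fun x ↦ by simpa using hbound 1 0 0 x
  have hψ := integrable_of_bound hψm fun x ↦ by simpa using hbound 0 1 0 x
  have hg := integrable_of_bound hgm fun x ↦ by simpa using hbound 0 0 1 x
  set s : SignType := SignType.sign (-ν A)
  set τ : SignType := SignType.sign (signedIntegral ν g)
  have hu : Integrable ((s : ℝ) • φ + ψ + (τ : ℝ) • g) ν.totalVariation :=
    ((hφ.smul _).add hψ).add (hg.smul _)
  have hu_integral :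
      signedIntegral ν ((s : ℝ) • φ + ψ + (τ : ℝ) • g) = 1 + |signedIntegral ν g| := by
    rw [signedIntegral_add ((hφ.smul _).add hψ) (hg.smul _), signedIntegral_add (hφ.smul _) hψ,
      signedIntegral_smul, signedIntegral_smul, h3φ, h3ψ, mul_comm (τ : ℝ), self_mul_sign]
    ring
  have hvar := totalVariation_ge_of_abs_sub_le_on hA hu hr (sign_neg_mul_self (ν A))
    (fun x ↦ by simpa using hbound s 1 τ x) (δ := 2 * ε) fun x hx ↦ by
      simpa [add_assoc] using abs_mul_add_sub_mul_le s.abs_coe_le_one (h2 x hx)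
        (by simpa [add_assoc] using hbound 1 1 τ x) (by simpa [add_assoc] using hbound (-1) 1 τ x)
  rw [hu_integral] at hvar
  have hA_le_t : ν.totalVariation.real A ≤ t := (measureReal_mono (Set.subset_univ A)).trans h1
  have hslack : 0 ≤ ε / r * (3 * t - 2 * ν.totalVariation.real A) :=
    mul_nonneg (by positivity) (by linarith [hA_le_t, measureReal_nonneg (μ := ν.totalVariation) (s := A)])
  rw [← measureReal_def]
  linear_combination hvar + hslack

/-- The key variation lemma: if `|ν|(K) ≤ t`, `φ ≥ r − ε` on `A`, `∫φ dν = 0`,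
`∫ψ dν = 1` and all signed combinations `σ₁φ + σ₂ψ + σ₃g` (with `σᵢ ∈ {−1,0,1}`)
are bounded by `r`, then `|ν|(K) ≥ 2|ν(A)| + 1/r + (1/r)·|∫g dν| − (3t/r)·ε`. -/
theorem variation_lower_bound
    {K : Type*} [MeasurableSpace K] (ν : SignedMeasure K)
    (A : Set K) (hA : MeasurableSet A)
    (φ ψ g : K → ℝ)
    (hφm : Measurable φ) (hψm : Measurable ψ) (hgm : Measurable g)
    (r t ε : ℝ) (hr : 0 < r) (ht : 0 < t) (hε : 0 < ε)
    (h1 : (ν.totalVariation Set.univ).toReal ≤ t)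
    (h2 : ∀ x ∈ A, r - ε ≤ φ x)
    (h3φ : signedIntegral ν φ = 0)
    (h3ψ : signedIntegral ν ψ = 1)
    (h4 : ∀ σ₁ ∈ ({-1, 0, 1} : Set ℝ), ∀ σ₂ ∈ ({-1, 0, 1} : Set ℝ),
      ∀ σ₃ ∈ ({-1, 0, 1} : Set ℝ), ∀ x : K,
        |σ₁ * φ x + σ₂ * ψ x + σ₃ * g x| ≤ r) :
    2 * |ν A| + 1 / r + (1 / r) * |signedIntegral ν g| - (3 * t / r) * ε ≤
      (ν.totalVariation Set.univ).toReal :=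
  variation_lower_bound_general ν A hA φ ψ g hφm hψm hgm r t ε hr hε h1 h2 h3φ h3ψ h4
end

section
/- Let T : L∞[0,1] ≃ ℓ∞ be a continuous linear equivalence with ‖Tg‖ ≥ ‖g‖ for every g, let φ_n = T⁻¹(e_n) for n ∈ ℕ, and let r = sup{‖∑_{i∈I} σ(i)·φ_i‖ : I ⊆ ℕ finite, σ : I → ({−1,1} : Set ℝ)}. Then, choosing measurable representatives of the φ_n, for almost every x ∈ [0,1] the series ∑_n |φ_n(x)| converges with sum at most r; consequently, for every bounded real sequence (a_n), the series ∑_n a_n·φ_n(x) converges for almost every x ∈ [0,1]. -/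
/-!
Off a single null set, every one of the countably many sign patterns `σ` satisfies
`∑ σ i * φ i x ≤ ‖∑ σ i • φ i‖ ≤ r`; taking `σ i` to be the sign of `φ i x` bounds each partial
sum of `∑ |φ i x|` by `r`. The supremum `r` is finite because `φ i = T⁻¹ eᵢ` and signed sums of
unit vectors have norm at most `1` in `ℓ∞`.
-/

open MeasureTheory ENNReal

noncomputable def μ01 : Measure ℝ := volume.restrict (Set.Icc (0 : ℝ) 1)

namespace MeasureTheory.Lp

variable {α : Type*} {m : MeasurableSpace α} {μ : Measure α}

lemma ae_norm_le_norm_top {E : Type*} [NormedAddCommGroup E] (g : Lp E ∞ μ) :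
    ∀ᵐ x ∂μ, ‖g x‖ ≤ ‖g‖ := by
  rw [Lp.norm_def, toReal_eLpNorm (Lp.aestronglyMeasurable g)]
  exact ae_le_lpNorm_exponent_top (Lp.memLp g)

lemma coeFn_finsetSum_smul {𝕜 E ι : Type*} [NormedRing 𝕜] [NormedAddCommGroup E] [Module 𝕜 E]
    [IsBoundedSMul 𝕜 E] {p : ℝ≥0∞} (s : Finset ι) (c : ι → 𝕜) (f : ι → Lp E p μ) :
    ⇑(∑ i ∈ s, c i • f i) =ᵐ[μ] fun x ↦ ∑ i ∈ s, c i • f i x := by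
  filter_upwards [coeFn_fun_finsetSum s (fun i ↦ c i • f i),
    (Filter.eventually_all_finset s).2 fun i _ ↦ coeFn_smul (c i) (f i)] with x hsum hsmul
  rw [hsum]
  exact Finset.sum_congr rfl fun i hi ↦ by simp [hsmul i hi]

end MeasureTheory.Lp

lemma lp.norm_sum_single_le {α : Type*} [DecidableEq α] {E : α → Type*}
    [∀ i, NormedAddCommGroup (E i)] (s : Finset α) (c : ∀ i, E i) {C : ℝ} (hC : 0 ≤ C)
    (hc : ∀ i ∈ s, ‖c i‖ ≤ C) : ‖∑ i ∈ s, lp.single ∞ i (c i)‖ ≤ C := by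
  refine lp.norm_le_of_forall_le hC fun j ↦ ?_
  rw [lp.coeFn_sum, Finset.sum_apply]
  simp only [lp.coeFn_single, Finset.sum_pi_single]
  split_ifs with hj
  · exact hc j hj
  · simpa using hC

lemma norm_sum_smul_map_single_le {α F : Type*} [DecidableEq α] [NormedAddCommGroup F]
    [NormedSpace ℝ F] (L : lp (fun _ : α ↦ ℝ) ∞ →L[ℝ] F) (s : Finset α) (σ : α → ℝ)
    (hσ : ∀ i ∈ s, |σ i| ≤ 1) : ‖∑ i ∈ s, σ i • L (lp.single ∞ i 1)‖ ≤ ‖L‖ := by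
  have hsum : ∑ i ∈ s, σ i • L (lp.single ∞ i 1) = L (∑ i ∈ s, lp.single ∞ i (σ i)) := by
    simp [map_sum, ← map_smul, ← lp.single_smul]
  rw [hsum]
  calc ‖L (∑ i ∈ s, lp.single ∞ i (σ i))‖ ≤ ‖L‖ * ‖∑ i ∈ s, lp.single ∞ i (σ i)‖ :=
        L.le_opNorm _
    _ ≤ ‖L‖ * 1 := by gcongr; exact lp.norm_sum_single_le s σ zero_le_one hσ
    _ = ‖L‖ := mul_one _

lemma summable_abs_of_signed_sum_le {f : ℕ → ℝ} {r : ℝ}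
    (h : ∀ (N : ℕ) (J : Finset ℕ), ∑ i ∈ Finset.range N, (if i ∈ J then 1 else -1) * f i ≤ r) :
    Summable (fun n ↦ |f n|) ∧ ∑' n, |f n| ≤ r := by
  have hpartial (N : ℕ) : ∑ i ∈ Finset.range N, |f i| ≤ r := by
    refine le_of_eq_of_le (Finset.sum_congr rfl fun i hi ↦ ?_) (h N {i ∈ Finset.range N | 0 ≤ f i})
    by_cases hfi : 0 ≤ f i
    · simp [hi, hfi, abs_of_nonneg hfi]
    · simp [hfi, abs_of_neg (not_le.1 hfi)]
  have hsummable := summable_of_sum_range_le (fun n ↦ abs_nonneg (f n)) hpartial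
  exact ⟨hsummable, hsummable.tsum_le_of_sum_range_le hpartial⟩

theorem ae_summable_abs_of_norm_signed_sum_le {α : Type*} {m : MeasurableSpace α}
    {μ : Measure α} {φ : ℕ → Lp ℝ ∞ μ} {r : ℝ}
    (h : ∀ (I : Finset ℕ) (σ : ℕ → ℝ), (∀ i ∈ I, σ i = 1 ∨ σ i = -1) →
      ‖∑ i ∈ I, σ i • φ i‖ ≤ r) :
    ∀ᵐ x ∂μ, Summable (fun n ↦ |φ n x|) ∧ ∑' n, |φ n x| ≤ r := by
  have hsigned : ∀ᵐ x ∂μ, ∀ (N : ℕ) (J : Finset ℕ),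
      ∑ i ∈ Finset.range N, (if i ∈ J then 1 else -1) * φ i x ≤ r := by
    simp only [ae_all_iff]
    intro N J
    set σ : ℕ → ℝ := fun i ↦ if i ∈ J then 1 else -1
    filter_upwards [Lp.ae_norm_le_norm_top (∑ i ∈ Finset.range N, σ i • φ i),
      Lp.coeFn_finsetSum_smul (Finset.range N) σ φ] with x hle hsum
    rw [hsum, Real.norm_eq_abs] at hle
    refine (le_abs_self _).trans (hle.trans (h _ σ fun i _ ↦ ?_))
    by_cases hi : i ∈ J <;> simp [σ, hi]
  filter_upwards [hsigned] with x hx using summable_abs_of_signed_sum_le hx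

theorem ae_summable_phi_general
    (T : Lp ℝ ∞ μ01 ≃L[ℝ] lp (fun _ : ℕ => ℝ) ∞)
    (φ : ℕ → Lp ℝ ∞ μ01) (hφ : ∀ n, φ n = T.symm (lp.single ∞ n 1))
    (r : ℝ)
    (hr : r = sSup {x : ℝ | ∃ (I : Finset ℕ) (σ : ℕ → ℝ),
      (∀ i ∈ I, σ i = 1 ∨ σ i = -1) ∧ x = ‖∑ i ∈ I, σ i • φ i‖}) :
    (∀ᵐ x ∂μ01, Summable (fun n => |(φ n : ℝ → ℝ) x|) ∧
      (∑' n, |(φ n : ℝ → ℝ) x|) ≤ r) ∧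
    (∀ a : ℕ → ℝ, (∃ M : ℝ, ∀ n, |a n| ≤ M) →
      ∀ᵐ x ∂μ01, Summable (fun n => a n * (φ n : ℝ → ℝ) x)) := by
  have hbdd : BddAbove {x : ℝ | ∃ (I : Finset ℕ) (σ : ℕ → ℝ),
      (∀ i ∈ I, σ i = 1 ∨ σ i = -1) ∧ x = ‖∑ i ∈ I, σ i • φ i‖} := by
    refine ⟨‖T.symm.toContinuousLinearMap‖, ?_⟩
    rintro _ ⟨I, σ, hσ, rfl⟩
    simp only [hφ]
    refine norm_sum_smul_map_single_le T.symm.toContinuousLinearMap I σ fun i hi ↦ ?_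
    rcases hσ i hi with h | h <;> simp [h]
  have habs := ae_summable_abs_of_norm_signed_sum_le fun I σ hσ ↦
    hr ▸ le_csSup hbdd ⟨I, σ, hσ, rfl⟩
  refine ⟨habs, fun a ⟨M, hM⟩ ↦ ?_⟩
  filter_upwards [habs] with x hx
  refine Summable.of_norm_bounded (hx.1.mul_left M) fun n ↦ ?_
  rw [norm_mul, Real.norm_eq_abs]
  exact mul_le_mul_of_nonneg_right (hM n) (abs_nonneg _)

/-- If `T : L∞[0,1] ≃ ℓ∞` is norm-increasing, `φ_n = T⁻¹(e_n)` and
`r = sup{‖∑_{i∈I} σ(i)φ_i‖}`, then `∑_n |φ_n(x)|` converges a.e. with sum at most `r`,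
and consequently `∑_n a_n φ_n(x)` converges a.e. for every bounded sequence `(a_n)`. -/
theorem ae_summable_phi
    (T : Lp ℝ ∞ μ01 ≃L[ℝ] lp (fun _ : ℕ => ℝ) ∞)
    (hT : ∀ g : Lp ℝ ∞ μ01, ‖g‖ ≤ ‖T g‖)
    (φ : ℕ → Lp ℝ ∞ μ01) (hφ : ∀ n, φ n = T.symm (lp.single ∞ n 1))
    (r : ℝ)
    (hr : r = sSup {x : ℝ | ∃ (I : Finset ℕ) (σ : ℕ → ℝ),
      (∀ i ∈ I, σ i = 1 ∨ σ i = -1) ∧ x = ‖∑ i ∈ I, σ i • φ i‖}) :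
    (∀ᵐ x ∂μ01, Summable (fun n => |(φ n : ℝ → ℝ) x|) ∧
      (∑' n, |(φ n : ℝ → ℝ) x|) ≤ r) ∧
    (∀ a : ℕ → ℝ, (∃ M : ℝ, ∀ n, |a n| ≤ M) →
      ∀ᵐ x ∂μ01, Summable (fun n => a n * (φ n : ℝ → ℝ) x)) :=
  ae_summable_phi_general T φ hφ r hr
end

section
/- Let T : L∞[0,1] ≃ ℓ∞ be a continuous linear equivalence with ‖Tg‖ ≥ ‖g‖ for every g, let φ_n = T⁻¹(e_n), and let r = sup{‖∑_{i∈I} σ(i)·φ_i‖ : I ⊆ ℕ finite, σ : I → ({−1,1} : Set ℝ)}. Let ε > 0, let I ⊆ ℕ be finite, σ : I → {−1,1}, set φ = ∑_{i∈I} σ(i)·φ_i, and let B ⊆ [0,1] be a measurable set such that φ(x) > r − ε for almost every x ∈ B. Then for almost every x ∈ B, ∑_{n ∉ I} |φ_n(x)| ≤ ε (with measurable representatives of the φ_n). -/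
/-!
Since `T⁻¹` is bounded, `r` is finite and bounds the norm of every signed sum of the `φ_n`.
Adding to `φ` a signed sum over a finite `J` disjoint from `I` gives another signed sum, so
almost everywhere `φ(x) + ∑_{j ∈ J} ±φ_j(x) ≤ r` for all such `J` and all (countably many) sign
patterns. Choosing the signs of the `φ_j(x)` yields `∑_{j ∈ J} |φ_j(x)| ≤ r - φ(x) < ε` on `B`.
-/

open MeasureTheory ENNReal

theorem lp.norm_sum_single_top_le {α : Type*} {E : α → Type*} [∀ i, NormedAddCommGroup (E i)]
    [DecidableEq α] (s : Finset α) (f : ∀ i, E i) {C : ℝ} (hC : 0 ≤ C)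
    (hf : ∀ i ∈ s, ‖f i‖ ≤ C) : ‖∑ i ∈ s, lp.single ∞ i (f i)‖ ≤ C := by
  refine lp.norm_le_of_forall_le hC fun j => ?_
  simp only [lp.coeFn_sum, lp.coeFn_single, Finset.sum_apply, Finset.sum_pi_single]
  split_ifs with hj
  · exact hf j hj
  · simpa using hC

theorem MeasureTheory.Lp.ae_norm_le_norm_top_s9 {α E : Type*} [MeasurableSpace α] {μ : Measure α}
    [NormedAddCommGroup E] (f : Lp E ∞ μ) : ∀ᵐ x ∂μ, ‖f x‖ ≤ ‖f‖ := by
  filter_upwards [ae_le_eLpNormEssSup (f := (f : α → E)) (μ := μ)] with x hx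
  have hfin : eLpNormEssSup f μ ≠ ∞ :=
    eLpNorm_exponent_top (f := (f : α → E)) ▸ Lp.eLpNorm_ne_top f
  rw [Lp.norm_def, eLpNorm_exponent_top, ← toReal_enorm]
  exact ENNReal.toReal_mono hfin hx

theorem bddAbove_norm_signed_sum {E : Type*} [NormedAddCommGroup E] [NormedSpace ℝ E]
    (L : lp (fun _ : ℕ => ℝ) ∞ →L[ℝ] E) (φ : ℕ → E) (hφ : ∀ n, φ n = L (lp.single ∞ n 1)) :
    BddAbove {x : ℝ | ∃ (I : Finset ℕ) (σ : ℕ → ℝ),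
      (∀ i ∈ I, σ i = 1 ∨ σ i = -1) ∧ x = ‖∑ i ∈ I, σ i • φ i‖} := by
  refine ⟨‖L‖, ?_⟩
  rintro _ ⟨I, σ, hσ, rfl⟩
  have hunit : ‖∑ i ∈ I, lp.single ∞ i (σ i)‖ ≤ 1 :=
    lp.norm_sum_single_top_le I σ zero_le_one fun i hi => by rcases hσ i hi with h | h <;> simp [h]
  calc ‖∑ i ∈ I, σ i • φ i‖ = ‖L (∑ i ∈ I, lp.single ∞ i (σ i))‖ := by
        simp [hφ, map_sum, ← map_smul, ← lp.single_smul]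
    _ ≤ ‖L‖ * 1 := (L.le_opNorm _).trans (by gcongr)
    _ = ‖L‖ := mul_one _

theorem exists_signed_sum_eq_add_signed_sum_compl {M : Type*} [AddCommMonoid M] [Module ℝ M]
    (φ : ℕ → M) (I : Finset ℕ) (σ : ℕ → ℝ) (hσ : ∀ i ∈ I, σ i = 1 ∨ σ i = -1)
    (J s : Finset {n : ℕ // n ∉ I}) :
    ∃ (K : Finset ℕ) (ρ : ℕ → ℝ), (∀ i ∈ K, ρ i = 1 ∨ ρ i = -1) ∧
      ∑ i ∈ I, σ i • φ i + ∑ j ∈ J, (if j ∈ s then 1 else -1 : ℝ) • φ j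
        = ∑ i ∈ K, ρ i • φ i := by
  let ρ : ℕ → ℝ := fun n => if h : n ∈ I then σ n else if ⟨n, h⟩ ∈ s then 1 else -1
  have hdisj : Disjoint I (J.map (Function.Embedding.subtype _)) :=
    Finset.disjoint_left.2 fun n hnI hnJ => by
      obtain ⟨j, -, rfl⟩ := Finset.mem_map.1 hnJ
      exact j.2 hnI
  refine ⟨I.disjUnion _ hdisj, ρ, fun n _ => ?_, ?_⟩
  · by_cases hn : n ∈ I
    · simpa [ρ, hn] using hσ n hn
    · by_cases hs : ⟨n, hn⟩ ∈ s <;> simp [ρ, hn, hs]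
  · rw [Finset.sum_disjUnion, Finset.sum_map]
    congr 1
    · exact Finset.sum_congr rfl fun i hi => by simp [ρ, hi]
    · exact Finset.sum_congr rfl fun j _ => by simp [ρ, j.2]

theorem MeasureTheory.Lp.ae_add_sum_abs_le_of_norm_add_signed_sum_le {α ι : Type*}
    [MeasurableSpace α] {μ : Measure α} [Countable ι] [DecidableEq ι]
    (g : Lp ℝ ∞ μ) (f : ι → Lp ℝ ∞ μ) (r : ℝ)
    (h : ∀ J s : Finset ι, ‖g + ∑ j ∈ J, (if j ∈ s then 1 else -1 : ℝ) • f j‖ ≤ r) :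
    ∀ᵐ x ∂μ, ∀ J : Finset ι, g x + ∑ j ∈ J, |f j x| ≤ r := by
  -- A sign pattern is encoded by the finset where it is `+1`; there are countably many, so the
  -- a.e. quantifier commutes with them, and at each `x` the signs of `f j x` are one of them.
  have hsigned : ∀ᵐ x ∂μ, ∀ J s : Finset ι,
      g x + ∑ j ∈ J, (if j ∈ s then 1 else -1) * f j x ≤ r := by
    refine ae_all_iff.2 fun J => ae_all_iff.2 fun s => ?_
    let τ : ι → ℝ := fun j => if j ∈ s then 1 else -1
    filter_upwards [Lp.ae_norm_le_norm_top_s9 (g + ∑ j ∈ J, τ j • f j),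
      Lp.coeFn_add g (∑ j ∈ J, τ j • f j), Lp.coeFn_fun_finsetSum J (fun j => τ j • f j),
      (Filter.eventually_all_finset J).2 fun j _ => Lp.coeFn_smul (τ j) (f j)]
      with x hnorm hadd hsum hsmul
    have hx : (g + ∑ j ∈ J, τ j • f j : Lp ℝ ∞ μ) x = g x + ∑ j ∈ J, τ j * f j x := by
      rw [hadd, Pi.add_apply, hsum]
      exact congrArg _ (Finset.sum_congr rfl fun j hj => by simp [hsmul j hj])
    rw [← hx]
    exact (le_abs_self _).trans (hnorm.trans (h J s))
  filter_upwards [hsigned] with x hx J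
  convert hx J (J.filter fun j => 0 ≤ f j x) using 2
  refine Finset.sum_congr rfl fun j hj => ?_
  by_cases hpos : 0 ≤ f j x
  · simp [hj, hpos, abs_of_nonneg hpos]
  · simp [hj, hpos, abs_of_neg (not_le.1 hpos)]

theorem ae_tail_small_on_B_general
    (T : Lp ℝ ∞ μ01 ≃L[ℝ] lp (fun _ : ℕ => ℝ) ∞)
    (φ : ℕ → Lp ℝ ∞ μ01) (hφ : ∀ n, φ n = T.symm (lp.single ∞ n 1))
    (r : ℝ)
    (hr : r = sSup {x : ℝ | ∃ (I : Finset ℕ) (σ : ℕ → ℝ),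
      (∀ i ∈ I, σ i = 1 ∨ σ i = -1) ∧ x = ‖∑ i ∈ I, σ i • φ i‖})
    (ε : ℝ)
    (I : Finset ℕ) (σ : ℕ → ℝ) (hσ : ∀ i ∈ I, σ i = 1 ∨ σ i = -1)
    (φS : Lp ℝ ∞ μ01) (hφS : φS = ∑ i ∈ I, σ i • φ i)
    (B : Set ℝ)
    (hφSB : ∀ᵐ x ∂μ01, x ∈ B → r - ε < (φS : ℝ → ℝ) x) :
    ∀ᵐ x ∂μ01, x ∈ B →
      Summable (fun n : {n : ℕ // n ∉ I} => |(φ (n : ℕ) : ℝ → ℝ) x|) ∧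
      (∑' n : {n : ℕ // n ∉ I}, |(φ (n : ℕ) : ℝ → ℝ) x|) ≤ ε := by
  have hbdd := bddAbove_norm_signed_sum (T.symm : lp (fun _ : ℕ => ℝ) ∞ →L[ℝ] Lp ℝ ∞ μ01) φ hφ
  have hsigned : ∀ J s : Finset {n : ℕ // n ∉ I},
      ‖φS + ∑ j ∈ J, (if j ∈ s then 1 else -1 : ℝ) • φ j‖ ≤ r := by
    intro J s
    obtain ⟨K, ρ, hρ, hK⟩ := exists_signed_sum_eq_add_signed_sum_compl φ I σ hσ J s
    rw [hr, hφS, hK]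
    exact le_csSup hbdd ⟨K, ρ, hρ, rfl⟩
  filter_upwards [Lp.ae_add_sum_abs_le_of_norm_add_signed_sum_le φS
    (fun j : {n : ℕ // n ∉ I} => φ j) r hsigned, hφSB] with x htail hφSx hxB
  have hpartial : ∀ J : Finset {n : ℕ // n ∉ I}, ∑ j ∈ J, |(φ j : ℝ → ℝ) x| ≤ ε := fun J => by
    linarith [htail J, hφSx hxB]
  have hsum := summable_of_sum_le (fun _ => abs_nonneg _) hpartial
  exact ⟨hsum, hsum.tsum_le_of_sum_le hpartial⟩

/-- If `T : L∞[0,1] ≃ ℓ∞` is norm-increasing, `φ_n = T⁻¹(e_n)`,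
`r = sup{‖∑_{i∈I} σ(i)φ_i‖}`, and `φ = ∑_{i∈I} σ(i)φ_i > r − ε` a.e. on a measurable
set `B ⊆ [0,1]`, then `∑_{n∉I} |φ_n(x)| ≤ ε` for almost every `x ∈ B`. -/
theorem ae_tail_small_on_B
    (T : Lp ℝ ∞ μ01 ≃L[ℝ] lp (fun _ : ℕ => ℝ) ∞)
    (hT : ∀ g : Lp ℝ ∞ μ01, ‖g‖ ≤ ‖T g‖)
    (φ : ℕ → Lp ℝ ∞ μ01) (hφ : ∀ n, φ n = T.symm (lp.single ∞ n 1))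
    (r : ℝ)
    (hr : r = sSup {x : ℝ | ∃ (I : Finset ℕ) (σ : ℕ → ℝ),
      (∀ i ∈ I, σ i = 1 ∨ σ i = -1) ∧ x = ‖∑ i ∈ I, σ i • φ i‖})
    (ε : ℝ) (hε : 0 < ε)
    (I : Finset ℕ) (σ : ℕ → ℝ) (hσ : ∀ i ∈ I, σ i = 1 ∨ σ i = -1)
    (φS : Lp ℝ ∞ μ01) (hφS : φS = ∑ i ∈ I, σ i • φ i)
    (B : Set ℝ) (hB : MeasurableSet B) (hBsub : B ⊆ Set.Icc (0 : ℝ) 1)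
    (hφSB : ∀ᵐ x ∂μ01, x ∈ B → r - ε < (φS : ℝ → ℝ) x) :
    ∀ᵐ x ∂μ01, x ∈ B →
      Summable (fun n : {n : ℕ // n ∉ I} => |(φ (n : ℕ) : ℝ → ℝ) x|) ∧
      (∑' n : {n : ℕ // n ∉ I}, |(φ (n : ℕ) : ℝ → ℝ) x|) ≤ ε :=
  ae_tail_small_on_B_general T φ hφ r hr ε I σ hσ φS hφS B hφSB
end

section
/- The infimum over r ∈ (0,1) of the function ξ(r) = (r + √((2−r)·r))/(r·(1−r)) + 1/r equals (14 + (3554 − 66√33)^(1/3) + (3554 + 66√33)^(1/3))/6. -/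
/-!
For `0 < r < 1` we have `xi r = (1 + √((2 - r) r)) / (r (1 - r))`, so `m ≤ xi r` reduces to
`(m r (1 - r) - 1)² ≤ (2 - r) r` whenever `m r (1 - r) > 1`. When `m` is the real root of
`2m³ - 14m² - 6m - 1`, the difference of the two sides factors as
`m² (1 - r) (r - r₀) (r - r*)²` with `r₀ ≈ 0.08` and `r* = (m - 4) / (m² - 6m - 3) ≈ 0.46`.
This is nonnegative once `m r (1 - r) > 1` (which forces `r > r₀`) and vanishes at `r*`, so `m`
is the least value of `xi`. Cardano's formula identifies
this root with the closed form.
-/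

open Real Set

noncomputable def xi (r : ℝ) : ℝ := (r + √((2 - r) * r)) / (r * (1 - r)) + 1 / r

lemma xi_eq_div {r : ℝ} (hr₀ : 0 < r) (hr₁ : r < 1) :
    xi r = (1 + √((2 - r) * r)) / (r * (1 - r)) := by
  have : 1 - r ≠ 0 := by linarith
  unfold xi
  field_simp
  ring

lemma cubic_root_mem_Ioo {m : ℝ} (hm : 2 * m ^ 3 - 14 * m ^ 2 - 6 * m - 1 = 0) :
    m ∈ Ioo (37 / 5 : ℝ) (371 / 50) := by
  constructor <;> by_contra! h
  · nlinarith [mul_nonneg (sub_nonneg.2 h) (sq_nonneg (m + 1 / 5)), sq_nonneg (m + 1 / 5),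
      mul_nonneg (sub_nonneg.2 h) (sq_nonneg (m + 1 / 4))]
  · nlinarith [mul_nonneg (sub_nonneg.2 h) (sq_nonneg (m + 1 / 5)), sq_nonneg (m + 1 / 5)]

/-- The cubic in `m` is the discriminant condition for this quartic in `r` to have a double root. -/
lemma two_sub_mul_sub_sq_eq_of_cubic {m : ℝ} (hm : 2 * m ^ 3 - 14 * m ^ 2 - 6 * m - 1 = 0)
    (hc : m ^ 2 - 6 * m - 3 ≠ 0) (r : ℝ) :
    (2 - r) * r - (m * (r * (1 - r)) - 1) ^ 2 =
      m ^ 2 * (1 - r) * (r - (m ^ 2 - 8 * m + 5) / (m ^ 2 - 6 * m - 3)) *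
        (r - (m - 4) / (m ^ 2 - 6 * m - 3)) ^ 2 := by
  generalize hcm : m ^ 2 - 6 * m - 3 = c at hc ⊢
  field_simp
  subst hcm
  linear_combination (-27 + 54 * r - 27 * r ^ 2 + 54 * m * r - 54 * m * r ^ 2 + m ^ 2
    - 10 * m ^ 2 * r + 9 * m ^ 2 * r ^ 2) * hm

lemma le_xi_of_cubic {m : ℝ} (hm : 2 * m ^ 3 - 14 * m ^ 2 - 6 * m - 1 = 0) {r : ℝ}
    (hr₀ : 0 < r) (hr₁ : r < 1) : m ≤ xi r := by
  obtain ⟨hm₁, hm₂⟩ := cubic_root_mem_Ioo hm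
  have hc : 0 < m ^ 2 - 6 * m - 3 := by nlinarith
  have hr : 0 < r * (1 - r) := by nlinarith
  rw [xi_eq_div hr₀ hr₁, le_div_iff₀ hr]
  suffices m * (r * (1 - r)) - 1 ≤ √((2 - r) * r) by linarith
  rcases le_or_gt (m * (r * (1 - r))) 1 with hle | hgt
  · linarith [sqrt_nonneg ((2 - r) * r)]
  apply le_sqrt_of_sq_le
  have hr_gt : (m ^ 2 - 8 * m + 5) / (m ^ 2 - 6 * m - 3) < r := by
    rw [div_lt_iff₀ hc]
    nlinarith
  have hfactor := two_sub_mul_sub_sq_eq_of_cubic hm hc.ne' r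
  have hfactor_nonneg : 0 ≤ m ^ 2 * (1 - r) * (r - (m ^ 2 - 8 * m + 5) / (m ^ 2 - 6 * m - 3)) *
      (r - (m - 4) / (m ^ 2 - 6 * m - 3)) ^ 2 := by
    have : 0 < 1 - r := by linarith
    have : 0 < r - (m ^ 2 - 8 * m + 5) / (m ^ 2 - 6 * m - 3) := by linarith
    positivity
  linarith

lemma exists_xi_eq_of_cubic {m : ℝ} (hm : 2 * m ^ 3 - 14 * m ^ 2 - 6 * m - 1 = 0) :
    ∃ r ∈ Ioo (0 : ℝ) 1, xi r = m := by
  obtain ⟨hm₁, hm₂⟩ := cubic_root_mem_Ioo hm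
  have hc : 0 < m ^ 2 - 6 * m - 3 := by nlinarith
  set r := (m - 4) / (m ^ 2 - 6 * m - 3) with hr_def
  have hrc : r * (m ^ 2 - 6 * m - 3) = m - 4 := div_mul_cancel₀ _ hc.ne'
  have hr_lo : 9 / 20 < r := by nlinarith
  have hr_hi : r < 47 / 100 := by nlinarith
  have hsq : (2 - r) * r = (m * (r * (1 - r)) - 1) ^ 2 := by
    have hfactor := two_sub_mul_sub_sq_eq_of_cubic hm hc.ne' r
    rw [← hr_def, sub_self] at hfactor
    linear_combination hfactor
  have hsqrt : √((2 - r) * r) = m * (r * (1 - r)) - 1 := by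
    rw [hsq, sqrt_sq (by nlinarith)]
  refine ⟨r, ⟨by linarith, by linarith⟩, ?_⟩
  have : 1 - r ≠ 0 := by linarith
  rw [xi_eq_div (by linarith) (by linarith), hsqrt]
  field_simp
  ring

lemma isLeast_xi_image {m : ℝ} (hm : 2 * m ^ 3 - 14 * m ^ 2 - 6 * m - 1 = 0) :
    IsLeast (xi '' Ioo 0 1) m := by
  refine ⟨exists_xi_eq_of_cubic hm, ?_⟩
  rintro _ ⟨r, ⟨hr₀, hr₁⟩, rfl⟩
  exact le_xi_of_cubic hm hr₀ hr₁

lemma rpow_one_third_add_rpow_one_third_pow_three {x y : ℝ} (hx : 0 ≤ x) (hy : 0 ≤ y) :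
    (x ^ (1 / 3 : ℝ) + y ^ (1 / 3 : ℝ)) ^ 3 =
      x + y + 3 * (x * y) ^ (1 / 3 : ℝ) * (x ^ (1 / 3 : ℝ) + y ^ (1 / 3 : ℝ)) := by
  have hcube {z : ℝ} (hz : 0 ≤ z) : (z ^ (1 / 3 : ℝ)) ^ 3 = z := by
    simpa using rpow_inv_natCast_pow hz (n := 3) (by norm_num)
  rw [mul_rpow hx hy]
  linear_combination hcube hx + hcube hy

lemma cardano_root_cubic :
    let m := (14 + (3554 - 66 * √33) ^ (1 / 3 : ℝ) + (3554 + 66 * √33) ^ (1 / 3 : ℝ)) / 6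
    2 * m ^ 3 - 14 * m ^ 2 - 6 * m - 1 = 0 := by
  intro m
  have h33 : √33 ^ 2 = 33 := sq_sqrt (by norm_num)
  have h33lt : √33 < 6 := by nlinarith [sqrt_nonneg 33]
  have hprod : (3554 - 66 * √33) * (3554 + 66 * √33) = 232 ^ 3 := by linear_combination -4356 * h33
  have hcbrt : ((232 : ℝ) ^ 3) ^ (1 / 3 : ℝ) = 232 := by
    simpa using pow_rpow_inv_natCast (by norm_num : (0 : ℝ) ≤ 232) (n := 3) (by norm_num)
  have hcardano := rpow_one_third_add_rpow_one_third_pow_three (x := 3554 - 66 * √33)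
    (y := 3554 + 66 * √33) (by linarith) (by positivity)
  rw [hprod, hcbrt] at hcardano
  linear_combination hcardano / 108

/-- The exact value of the infimum of
`ξ(r) = (r + √((2−r)r))/(r(1−r)) + 1/r` over `r ∈ (0,1)`:
it equals `(14 + (3554 − 66√33)^(1/3) + (3554 + 66√33)^(1/3))/6`. -/
theorem xi_inf_exact_value :
    sInf ((fun r : ℝ => (r + Real.sqrt ((2 - r) * r)) / (r * (1 - r)) + 1 / r) ''
        Set.Ioo (0 : ℝ) 1) =
      (14 + (3554 - 66 * Real.sqrt 33) ^ ((1 : ℝ) / 3) +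
        (3554 + 66 * Real.sqrt 33) ^ ((1 : ℝ) / 3)) / 6 :=
  (isLeast_xi_image cardano_root_cubic).csInf_eq
end
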